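/- arXiv:2402.04752 — 4 statements merged into one kernel-verified Lean document; each statement's English description precedes it below -/
import Mathlib

section
/- Let μ and ν be finite measures on a measurable space, let β ∈ (0,1) and c > 0, and suppose ν(A) ≤ c·(μ(A))^β for every measurable set A. Then ν is absolutely continuous with respect to μ, and the Radon–Nikodym derivative dν/dμ belongs to L^p(μ) for every real p with 1 ≤ p < 1/(1−β). -/
/-!
Markov's inequality for the density `g = dν/dμ` gives `t • μ {g ≥ t} ≤ ν {g ≥ t} ≤ c • μ {g ≥ t} ^ β`,
hence `μ {g ≥ t} ≤ (c / t) ^ q` with `q = 1 / (1 - β)`: `g` is in weak `L^q`. Since `μ` is finite,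
the layer-cake formula `∫ g ^ p = p ∫ t ^ (p - 1) μ {g ≥ t} dt` then converges for every `p < q`.
-/

open MeasureTheory

open Set ENNReal

namespace ENNReal

theorem le_div_rpow_of_mul_le_mul_rpow {m C t : ℝ≥0∞} {β : ℝ} (hβ : β < 1) (hm : m ≠ ∞)
    (ht0 : t ≠ 0) (ht : t ≠ ∞) (h : t * m ≤ C * m ^ β) : m ≤ (C / t) ^ (1 - β)⁻¹ := by
  rcases eq_or_ne m 0 with rfl | hm0
  · exact zero_le
  have hsub : 1 - β ≠ 0 := (sub_pos.2 hβ).ne'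
  have hsplit : t * m ^ (1 - β) ≤ C := by
    refine (ENNReal.mul_le_mul_iff_left (rpow_pos (p := β) (pos_iff_ne_zero.2 hm0) hm).ne'
      (rpow_ne_top_of_ne_zero hm0 hm)).1 ?_
    rwa [mul_assoc, ← rpow_add _ _ hm0 hm, sub_add_cancel, rpow_one]
  calc m = (m ^ (1 - β)) ^ (1 - β)⁻¹ := by rw [← rpow_mul, mul_inv_cancel₀ hsub, rpow_one]
    _ ≤ (C / t) ^ (1 - β)⁻¹ :=
      rpow_le_rpow ((ENNReal.le_div_iff_mul_le (.inl ht0) (.inl ht)).2 (mul_comm t _ ▸ hsplit))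
        (inv_nonneg.2 (sub_pos.2 hβ).le)

end ENNReal

namespace MeasureTheory.Measure

variable {X : Type*} [MeasurableSpace X] {μ ν : Measure X}

theorem absolutelyContinuous_of_le_mul_rpow {C : ℝ≥0∞} {β : ℝ} (hβ : 0 < β)
    (h : ∀ A, MeasurableSet A → ν A ≤ C * μ A ^ β) : ν ≪ μ :=
  .mk fun A hA hμA ↦ le_antisymm (by simpa [hμA, zero_rpow_of_pos hβ] using h A hA) zero_le

theorem mul_meas_ge_rnDeriv_le (t : ℝ≥0∞) :
    t * μ {x | t ≤ ν.rnDeriv μ x} ≤ ν {x | t ≤ ν.rnDeriv μ x} := by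
  set S := {x | t ≤ ν.rnDeriv μ x}
  calc t * μ S = t * μ.restrict S S := by rw [restrict_apply_self]
    _ ≤ ∫⁻ x in S, ν.rnDeriv μ x ∂μ := mul_meas_ge_le_lintegral (measurable_rnDeriv ν μ) t
    _ ≤ ν S := setLIntegral_rnDeriv_le S

theorem meas_ge_rnDeriv_le_div_rpow [IsFiniteMeasure μ] {C t : ℝ≥0∞} {β : ℝ} (hβ : β < 1)
    (h : ∀ A, MeasurableSet A → ν A ≤ C * μ A ^ β) (ht0 : t ≠ 0) (ht : t ≠ ∞) :
    μ {x | t ≤ ν.rnDeriv μ x} ≤ (C / t) ^ (1 - β)⁻¹ :=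
  le_div_rpow_of_mul_le_mul_rpow hβ (measure_ne_top μ _) ht0 ht <|
    (mul_meas_ge_rnDeriv_le t).trans
      (h _ (measurableSet_le measurable_const (measurable_rnDeriv ν μ)))

end MeasureTheory.Measure

namespace MeasureTheory

theorem setLIntegral_lt_top_of_le_mul_ofReal {α : Type*} [MeasurableSpace α] {μ : Measure α}
    {s : Set α} {F : α → ℝ≥0∞} {g : α → ℝ} {K : ℝ≥0∞} (hs : MeasurableSet s) (hK : K ≠ ∞)
    (hg : IntegrableOn g s μ) (hF : ∀ x ∈ s, F x ≤ K * ENNReal.ofReal (g x)) :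
    ∫⁻ x in s, F x ∂μ < ∞ :=
  calc ∫⁻ x in s, F x ∂μ ≤ ∫⁻ x in s, K * ENNReal.ofReal (g x) ∂μ := setLIntegral_mono' hs hF
    _ = K * ∫⁻ x in s, ENNReal.ofReal (g x) ∂μ := lintegral_const_mul' _ _ hK
    _ < ∞ := mul_lt_top hK.lt_top hg.lintegral_lt_top

variable {X : Type*} [MeasurableSpace X] {μ : Measure X}

theorem lintegral_rpow_lt_top_of_meas_ge_le_rpow_neg [IsFiniteMeasure μ] {f : X → ℝ}
    (hf_nn : 0 ≤ᵐ[μ] f) (hf : AEMeasurable f μ) {p q : ℝ} {K : ℝ≥0∞} (hp : 0 < p)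
    (hpq : p < q) (hK : K ≠ ∞)
    (htail : ∀ t : ℝ, 1 < t → μ {x | t ≤ f x} ≤ K * ENNReal.ofReal t ^ (-q)) :
    ∫⁻ x, ENNReal.ofReal (f x ^ p) ∂μ < ∞ := by
  rw [lintegral_rpow_eq_lintegral_meas_le_mul μ hf_nn hf hp, ← Ioc_union_Ioi_eq_Ioi zero_le_one,
    lintegral_union measurableSet_Ioi Ioc_disjoint_Ioi_same]
  refine mul_lt_top ofReal_lt_top (add_lt_top.2 ⟨?_, ?_⟩)
  · refine setLIntegral_lt_top_of_le_mul_ofReal measurableSet_Ioc (measure_ne_top μ univ)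
      (intervalIntegral.intervalIntegrable_rpow' (r := p - 1) (by linarith)).1 fun t _ ↦ ?_
    gcongr
    exact subset_univ _
  · refine setLIntegral_lt_top_of_le_mul_ofReal measurableSet_Ioi hK
      ((integrableOn_Ioi_rpow_iff zero_lt_one).2 (by linarith : p - 1 - q < -1)) fun t ht ↦ ?_
    have ht0 : 0 < t := zero_lt_one.trans ht
    calc μ {x | t ≤ f x} * ENNReal.ofReal (t ^ (p - 1))
        ≤ K * ENNReal.ofReal t ^ (-q) * ENNReal.ofReal (t ^ (p - 1)) := by gcongr; exact htail t ht
      _ = K * ENNReal.ofReal (t ^ (p - 1 - q)) := by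
        rw [ofReal_rpow_of_pos ht0, mul_assoc, ← ofReal_mul (Real.rpow_nonneg ht0.le _),
          ← Real.rpow_add ht0, neg_add_eq_sub, sub_sub, add_comm 1 q, ← sub_sub]

theorem memLp_of_meas_ge_le_rpow_neg [IsFiniteMeasure μ] {f : X → ℝ}
    (hf_nn : ∀ x, 0 ≤ f x) (hf : Measurable f) {p q : ℝ} {K : ℝ≥0∞} (hp : 0 < p)
    (hpq : p < q) (hK : K ≠ ∞)
    (htail : ∀ t : ℝ, 1 < t → μ {x | t ≤ f x} ≤ K * ENNReal.ofReal t ^ (-q)) :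
    MemLp f (ENNReal.ofReal p) μ := by
  refine ⟨hf.aestronglyMeasurable, ?_⟩
  rw [eLpNorm_lt_top_iff_lintegral_rpow_enorm_lt_top (by simpa using hp) ofReal_ne_top,
    toReal_ofReal hp.le]
  simp_rw [Real.enorm_eq_ofReal (hf_nn _), ofReal_rpow_of_nonneg (hf_nn _) hp.le]
  exact lintegral_rpow_lt_top_of_meas_ge_le_rpow_neg (.of_forall hf_nn) hf.aemeasurable hp hpq hK
    htail

end MeasureTheory

theorem stmt_7_general {X : Type*} [MeasurableSpace X] (μ ν : Measure X)
    [IsFiniteMeasure μ] [IsFiniteMeasure ν]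
    (β c : ℝ) (hβ0 : 0 < β) (hβ1 : β < 1)
    (h : ∀ A : Set X, MeasurableSet A → ν A ≤ ENNReal.ofReal c * μ A ^ β) :
    ν ≪ μ ∧ ∀ p : ℝ, 1 ≤ p → p < 1 / (1 - β) →
      MemLp (fun x => (ν.rnDeriv μ x).toReal) (ENNReal.ofReal p) μ := by
  refine ⟨Measure.absolutelyContinuous_of_le_mul_rpow hβ0 h, fun p hp1 hpq ↦ ?_⟩
  have hq : 0 ≤ (1 - β)⁻¹ := inv_nonneg.2 (sub_pos.2 hβ1).le
  refine memLp_of_meas_ge_le_rpow_neg (fun _ ↦ toReal_nonneg)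
    (Measure.measurable_rnDeriv ν μ).ennreal_toReal (by linarith) (by rwa [one_div] at hpq)
    (rpow_ne_top_of_nonneg hq (ofReal_ne_top (r := c))) fun t ht ↦ ?_
  calc μ {x | t ≤ (ν.rnDeriv μ x).toReal}
      ≤ μ {x | ENNReal.ofReal t ≤ ν.rnDeriv μ x} :=
        measure_mono fun x hx ↦ (ofReal_le_ofReal hx).trans ofReal_toReal_le
    _ ≤ (ENNReal.ofReal c / ENNReal.ofReal t) ^ (1 - β)⁻¹ :=
        Measure.meas_ge_rnDeriv_le_div_rpow hβ1 h (ofReal_pos.2 (by linarith)).ne' ofReal_ne_top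
    _ = ENNReal.ofReal c ^ (1 - β)⁻¹ * ENNReal.ofReal t ^ (-(1 - β)⁻¹) := by
        rw [div_rpow_of_nonneg _ _ hq, rpow_neg, div_eq_mul_inv]

/-- Let `μ` and `ν` be finite measures, `β ∈ (0,1)`, `c > 0`, and
suppose `ν(A) ≤ c·μ(A)^β` for every measurable set `A`. Then `ν ≪ μ` and the
Radon–Nikodym derivative `dν/dμ` belongs to `L^p(μ)` for every
`1 ≤ p < 1/(1−β)`. -/
theorem stmt_7 {X : Type*} [MeasurableSpace X] (μ ν : Measure X)
    [IsFiniteMeasure μ] [IsFiniteMeasure ν]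
    (β c : ℝ) (hβ0 : 0 < β) (hβ1 : β < 1) (hc : 0 < c)
    (h : ∀ A : Set X, MeasurableSet A → ν A ≤ ENNReal.ofReal c * μ A ^ β) :
    ν ≪ μ ∧ ∀ p : ℝ, 1 ≤ p → p < 1 / (1 - β) →
      MemLp (fun x => (ν.rnDeriv μ x).toReal) (ENNReal.ofReal p) μ :=
  stmt_7_general μ ν β c hβ0 hβ1 h
end

section
/- Let X be a Polish space, τ : ℝ^d × X → X a jointly continuous action of (ℝ^d, +), and μ an invariant and ergodic Borel probability measure on X. Let A ⊆ X be a Borel set and Z ⊆ ℝ^d a dense subset such that μ( τ(y,·)⁻¹(A) ∖ A ) = 0 for every y ∈ Z. Then μ(A) = 0 or μ(A) = 1. -/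
/-!
Since `μ (τ(y,·)⁻¹ A ∆ A)` depends continuously on `y` (finite measures on Polish spaces are
inner regular), the set of `y` for which `τ(y,·)⁻¹ A =ᵐ[μ] A` is closed; it contains the dense
set `Z` (measure preservation turns the one-sided hypothesis into a two-sided one), so `A` is
a.e. invariant under all of `ℝ^d`. By Fubini and translation invariance of Lebesgue measure,
an a.e. invariant set agrees a.e. with the strictly invariant set
`{x | τ(y,x) ∈ A for Lebesgue-a.e. y}`, to which ergodicity applies.
-/

open MeasureTheory Filter Set

theorem eventuallyConst_ae_iff_measure_eq_zero_or_one {X : Type*} [MeasurableSpace X]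
    {μ : Measure X} [IsProbabilityMeasure μ] {s : Set X} (hs : NullMeasurableSet s μ) :
    EventuallyConst s (ae μ) ↔ μ s = 0 ∨ μ s = 1 := by
  rw [eventuallyConst_set', ae_eq_empty, ae_eq_univ_iff_measure_eq hs, measure_univ]

section InvariantModification

variable {G X : Type*} [MeasurableSpace G] [AddGroup G] [MeasurableAdd G]
  [AddAction G X] [MeasurableSpace X] [MeasurableVAdd₂ G X]
  {μ : Measure X} [SFinite μ]

theorem exists_invariant_ae_eq_of_forall_preimage_vadd_ae_eq (ν : Measure G) [SFinite ν]
    [ν.IsAddRightInvariant] [NeZero ν] {s : Set X} (hs : MeasurableSet s)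
    (h : ∀ g : G, (g +ᵥ ·) ⁻¹' s =ᵐ[μ] s) :
    ∃ t, MeasurableSet t ∧ (∀ g : G, (g +ᵥ ·) ⁻¹' t = t) ∧ t =ᵐ[μ] s := by
  have hvadd : MeasurableSet {p : G × X | p.1 +ᵥ p.2 ∈ s} := hs.preimage measurable_vadd
  refine ⟨{x | ∀ᵐ g ∂ν, g +ᵥ x ∈ s}, ?_, fun g' ↦ ?_, ?_⟩
  · simp only [ae_iff]
    exact measurable_measure_prodMk_right hvadd.compl (measurableSet_singleton 0)
  · ext x
    simp only [mem_preimage, mem_ofPred_eq, vadd_vadd, ae_iff]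
    exact Iff.of_eq (congrArg (· = 0) (measure_preimage_add_right ν g' {g | g +ᵥ x ∉ s}))
  · have hswap : ∀ᵐ x ∂μ, ∀ᵐ g ∂ν, (g +ᵥ x ∈ s ↔ x ∈ s) :=
      (Measure.ae_ae_comm (hvadd.mem.iff (hs.preimage measurable_snd).mem).setOf).1
        (ae_of_all _ fun g ↦ (h g).mem_iff)
    filter_upwards [hswap] with x hx
    exact propext <| (eventually_congr hx).trans eventually_const

theorem ErgodicVAdd.of_forall_preimage_vadd_eq (ν : Measure G) [SFinite ν]
    [ν.IsAddRightInvariant] [NeZero ν] [VAddInvariantMeasure G X μ]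
    (h : ∀ s, MeasurableSet s → (∀ g : G, (g +ᵥ ·) ⁻¹' s = s) → EventuallyConst s (ae μ)) :
    ErgodicVAdd G X μ where
  aeconst_of_forall_preimage_vadd_ae_eq hs hinv := by
    obtain ⟨t, htm, htinv, hts⟩ :=
      exists_invariant_ae_eq_of_forall_preimage_vadd_ae_eq ν hs hinv
    exact (h t htm htinv).congr hts

end InvariantModification

abbrev AddAction.ofUncurried {G X : Type*} [AddMonoid G] (τ : G × X → X)
    (zero : ∀ x, τ (0, x) = x) (add : ∀ g g' x, τ (g + g', x) = τ (g, τ (g', x))) :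
    AddAction G X where
  vadd g x := τ (g, x)
  zero_vadd := zero
  add_vadd := add

/-- Let `X` be Polish, `τ` a jointly continuous `ℝ^d`-action and
`μ` an invariant ergodic Borel probability measure. If `A ⊆ X` is Borel and
`Z ⊆ ℝ^d` is dense with `μ(τ(y,·)⁻¹(A) ∖ A) = 0` for every `y ∈ Z`, then
`μ(A) = 0` or `μ(A) = 1`. -/
theorem stmt_14 {X : Type*} [TopologicalSpace X] [PolishSpace X]
    [MeasurableSpace X] [BorelSpace X] (d : ℕ)
    (τ : (Fin d → ℝ) × X → X) (hτcont : Continuous τ)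
    (hτzero : ∀ x, τ (0, x) = x)
    (hτadd : ∀ (y y' : Fin d → ℝ) (x : X), τ (y + y', x) = τ (y, τ (y', x)))
    (μ : Measure X) [IsProbabilityMeasure μ]
    (hinv : ∀ y : Fin d → ℝ, Measure.map (fun x => τ (y, x)) μ = μ)
    (herg : ∀ B : Set X, MeasurableSet B →
      (∀ y : Fin d → ℝ, (fun x => τ (y, x)) ⁻¹' B = B) → μ B = 0 ∨ μ B = 1)
    (A : Set X) (hA : MeasurableSet A)
    (Z : Set (Fin d → ℝ)) (hZ : Dense Z)
    (hnull : ∀ y ∈ Z, μ (((fun x => τ (y, x)) ⁻¹' A) \ A) = 0) :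
    μ A = 0 ∨ μ A = 1 := by
  -- `y +ᵥ x` unfolds to `τ (y, x)`, so the hypotheses apply verbatim to this action.
  let := AddAction.ofUncurried τ hτzero hτadd
  have : ContinuousVAdd (Fin d → ℝ) X := ⟨hτcont⟩
  have : MeasurableVAdd₂ (Fin d → ℝ) X := ⟨hτcont.measurable⟩
  have : VAddInvariantMeasure (Fin d → ℝ) X μ :=
    ⟨fun y s hs ↦ (Measure.map_apply (measurable_const_vadd y) hs).symm.trans
      (DFunLike.congr_fun (hinv y) s)⟩
  have : ErgodicVAdd (Fin d → ℝ) X μ := .of_forall_preimage_vadd_eq volume fun B hB hBinv ↦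
    (eventuallyConst_ae_iff_measure_eq_zero_or_one hB.nullMeasurableSet).2 (herg B hB hBinv)
  have hdense : Dense {y : Fin d → ℝ | (y +ᵥ ·) ⁻¹' A =ᵐ[μ] A} := hZ.mono fun y hy ↦
    ae_eq_of_ae_subset_of_measure_ge (ae_le_set.2 (hnull y hy))
      (measure_preimage_vadd μ y A).ge (hA.preimage (measurable_const_vadd y)).nullMeasurableSet
      (measure_ne_top μ A)
  exact (eventuallyConst_ae_iff_measure_eq_zero_or_one hA.nullMeasurableSet).1
    (aeconst_of_dense_setOfPred_preimage_vadd_ae hA.nullMeasurableSet hdense)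
end

section
/- If (X, d) is a totally bounded metric space, then the space of all bounded, uniformly continuous real-valued functions on X, equipped with the supremum metric, is separable. -/
open UniformSpace BoundedContinuousFunction

/-- If `(X, d)` is a totally bounded metric space, then the space
of all bounded, uniformly continuous real-valued functions on `X`, equipped
with the supremum metric, is separable. -/
theorem stmt_15 {X : Type*} [MetricSpace X]
    (h : TotallyBounded (Set.univ : Set X)) :
    TopologicalSpace.SeparableSpace
      {f : BoundedContinuousFunction X ℝ // UniformContinuous f} := by
  -- The completion of `X` is compact
  have hK : CompactSpace (Completion X) := by
    refine ⟨TotallyBounded.isCompact_of_isClosed ?_ isClosed_univ⟩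
    have h1 : TotallyBounded ((↑) '' (Set.univ : Set X) : Set (Completion X)) :=
      h.image (Completion.uniformContinuous_coe X)
    have h2 := h1.closure
    rwa [Set.image_univ, Completion.denseRange_coe.closure_range] at h2
  -- so `C(Completion X, ℝ)` and hence `Completion X →ᵇ ℝ` are second countable
  haveI : SecondCountableTopology (Completion X →ᵇ ℝ) :=
    (ContinuousMap.isometryEquivBoundedOfCompact (Completion X)
      ℝ).symm.isometry.isEmbedding.secondCountableTopology
  -- the map sending `f` to its extension to the completion is an isometry
  set Φ : {f : BoundedContinuousFunction X ℝ // UniformContinuous f} → (Completion X →ᵇ ℝ) :=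
    fun f => BoundedContinuousFunction.mkOfCompact
      ⟨Completion.extension f.1, Completion.continuous_extension⟩ with hΦ
  have hext : ∀ (f : {f : BoundedContinuousFunction X ℝ // UniformContinuous f}) (x : X),
      Φ f (x : Completion X) = f.1 x := fun f x => Completion.extension_coe f.2 x
  have hiso : Isometry Φ := by
    intro f g
    rw [edist_dist, edist_dist]
    congr 1
    apply le_antisymm
    · rw [BoundedContinuousFunction.dist_le dist_nonneg]
      intro y
      refine Completion.induction_on y ?_ ?_
      · exact isClosed_le (by fun_prop) continuous_const
      · intro x
        rw [hext f x, hext g x]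
        exact BoundedContinuousFunction.dist_coe_le_dist x
    · rw [Subtype.dist_eq, BoundedContinuousFunction.dist_le dist_nonneg]
      intro x
      rw [← hext f x, ← hext g x]
      exact BoundedContinuousFunction.dist_coe_le_dist _
  haveI : SecondCountableTopology {f : BoundedContinuousFunction X ℝ // UniformContinuous f} :=
    hiso.isEmbedding.secondCountableTopology
  infer_instance
end

section
/- Let X be a metric space, S ⊆ X a dense Borel subset, and (ρ_n), ρ Borel probability measures on X with ρ_n(X ∖ S) = 0 for all n and ρ(X ∖ S) = 0. If ρ_n converges weakly to ρ on X, then the restrictions of these measures to S (regarded as Borel probability measures on the metric subspace S) converge weakly on S: for every bounded continuous F : S → ℝ, ∫_S F dρ_n → ∫_S F dρ. -/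
open MeasureTheory Filter

/-- Let `S ⊆ X` be a dense Borel subset of a metric space, and
`(ρ_n)`, `ρ` Borel probability measures supported on `S` (i.e. vanishing on
`X ∖ S`). If `ρ_n → ρ` weakly on `X`, then the restrictions to the subspace `S`
converge weakly on `S`: for every bounded continuous `F : S → ℝ`,
`∫_S F dρ_n → ∫_S F dρ`. -/
theorem stmt_17 {X : Type*} [MetricSpace X] [MeasurableSpace X] [BorelSpace X]
    (S : Set X) (hSdense : Dense S) (hSmeas : MeasurableSet S)
    (ρs : ℕ → Measure X) (ρ : Measure X)
    [∀ n, IsProbabilityMeasure (ρs n)] [IsProbabilityMeasure ρ]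
    (hsupp : ∀ n, ρs n Sᶜ = 0) (hsupp' : ρ Sᶜ = 0)
    (hconv : ∀ f : BoundedContinuousFunction X ℝ,
      Tendsto (fun n => ∫ x, f x ∂(ρs n)) atTop (nhds (∫ x, f x ∂ρ))) :
    ∀ F : BoundedContinuousFunction S ℝ,
      Tendsto (fun n => ∫ x : S, F x ∂((ρs n).comap Subtype.val)) atTop
        (nhds (∫ x : S, F x ∂(ρ.comap Subtype.val))) := by
  have hemb : MeasurableEmbedding (Subtype.val : S → X) :=
    MeasurableEmbedding.subtype_coe hSmeas
  -- comap of a measure vanishing outside S evaluated at a preimage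
  have key : ∀ (μ : Measure X), μ Sᶜ = 0 → ∀ U : Set X,
      μ.comap Subtype.val ((Subtype.val : S → X) ⁻¹' U) = μ U := by
    intro μ hμ U
    rw [hemb.comap_apply, Set.image_preimage_eq_inter_range, Subtype.range_coe,
      measure_inter_conull hμ]
  -- the comap measures are probability measures
  have hprob : ∀ (μ : Measure X) [IsProbabilityMeasure μ], μ Sᶜ = 0 →
      IsProbabilityMeasure (μ.comap (Subtype.val : S → X)) := by
    intro μ _ hμ
    constructor
    have := key μ hμ Set.univ
    simpa using this
  haveI h1 : IsProbabilityMeasure (ρ.comap (Subtype.val : S → X)) := hprob ρ hsupp'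
  haveI h2 : ∀ n, IsProbabilityMeasure ((ρs n).comap (Subtype.val : S → X)) :=
    fun n => hprob (ρs n) (hsupp n)
  -- probability measures on X and their weak convergence
  set P : ProbabilityMeasure X := ⟨ρ, inferInstance⟩
  set Ps : ℕ → ProbabilityMeasure X := fun n => ⟨ρs n, inferInstance⟩
  have hPconv : Tendsto Ps atTop (nhds P) :=
    MeasureTheory.ProbabilityMeasure.tendsto_iff_forall_integral_tendsto.mpr hconv
  -- probability measures on S
  set Q : ProbabilityMeasure S := ⟨ρ.comap Subtype.val, h1⟩
  set Qs : ℕ → ProbabilityMeasure S := fun n => ⟨(ρs n).comap Subtype.val, h2 n⟩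
  have h_opens : ∀ G : Set S, IsOpen G → Q G ≤ atTop.liminf (fun i => Qs i G) := by
    intro G hG
    obtain ⟨U, hU, rfl⟩ := isOpen_induced_iff.mp hG
    have hEQ : (Q : Measure S) ((Subtype.val : S → X) ⁻¹' U) = (P : Measure X) U :=
      key ρ hsupp' U
    have hEQs : ∀ n, (Qs n : Measure S) ((Subtype.val : S → X) ⁻¹' U)
        = (Ps n : Measure X) U := fun n => key (ρs n) (hsupp n) U
    have hlim : (P : Measure X) U ≤ atTop.liminf fun i => (Ps i : Measure X) U :=
      MeasureTheory.ProbabilityMeasure.le_liminf_measure_open_of_tendsto hPconv hU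
    have hlim' : (Q : Measure S) ((Subtype.val : S → X) ⁻¹' U) ≤
        atTop.liminf fun i => (Qs i : Measure S) ((Subtype.val : S → X) ⁻¹' U) := by
      rw [hEQ]
      refine hlim.trans (le_of_eq ?_)
      exact Filter.liminf_congr (Filter.Eventually.of_forall fun n => (hEQs n).symm)
    -- convert from ℝ≥0∞ to ℝ≥0
    have aux : ENNReal.ofNNReal (atTop.liminf fun i => Qs i ((Subtype.val : S → X) ⁻¹' U)) =
        atTop.liminf (ENNReal.ofNNReal ∘ fun i => Qs i ((Subtype.val : S → X) ⁻¹' U)) := by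
      refine Monotone.map_liminf_of_continuousAt (F := atTop) ENNReal.coe_mono
        (fun i => Qs i ((Subtype.val : S → X) ⁻¹' U)) ?_ ?_ ?_
      · exact ENNReal.continuous_coe.continuousAt
      · exact IsBoundedUnder.isCoboundedUnder_ge ⟨1, Filter.eventually_map.mpr (Filter.Eventually.of_forall fun i => (Qs i).apply_le_one _)⟩
      · exact ⟨0, by simp⟩
    rw [← ENNReal.coe_le_coe, aux]
    simpa only [Function.comp_def, ProbabilityMeasure.ennreal_coeFn_eq_coeFn_toMeasure]
      using hlim'
  have := MeasureTheory.tendsto_of_forall_isOpen_le_liminf h_opens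
  have hQconv := MeasureTheory.ProbabilityMeasure.tendsto_iff_forall_integral_tendsto.mp this
  intro F
  exact hQconv F
end
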